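/- For all L ≥ 0 and c ≥ 0 there exist a 2-featured undirected graph G = (V, E, f) that is the gadgetisation of a strict linear order and a 2-featured undirected graph H = (V, F, f) over the same vertices and features that is the gadgetisation of a directed graph which is not a strict linear order, such that G, v ≡^{L,c} H, v for every v ∈ V. -/

import Mathlib

/-- A binary relation is a strict linear order if it is irreflexive, transitive
and total. -/
def IsSLO {V : Type} (E : V → V → Prop) : Prop :=
  (∀ v, ¬ E v v) ∧ (∀ u v w, E u v → E v w → E u w) ∧
  (∀ u v : V, u ≠ v → E u v ∨ E v u)
/-- A `2`-featured undirected graph: finite nonempty vertex set, symmetric edge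
relation and feature map into `{0,1}²`. -/
structure UFG where
  V : Type
  [fintypeV : Fintype V]
  nonemptyV : Nonempty V
  E : V → V → Prop
  symm : ∀ x y, E x y → E y x
  f : V → Fin 2 → Bool

attribute [instance] UFG.fintypeV

/-- A directed graph (finite nonempty vertex set, edge relation). -/
structure DGraph where
  V : Type
  [fintypeV : Fintype V]
  nonemptyV : Nonempty V
  E : V → V → Prop

attribute [instance] DGraph.fintypeV

/-- Vertices of the gadgetisation: three disjoint copies of `V`
(sources `gs v`, sinks `gt v`, identifiers `gi v`). -/
abbrev Gad (V : Type) : Type := V ⊕ V ⊕ V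

def gs {V : Type} (v : V) : Gad V := Sum.inl v
def gt {V : Type} (v : V) : Gad V := Sum.inr (Sum.inl v)
def gi {V : Type} (v : V) : Gad V := Sum.inr (Sum.inr v)

/-- One orientation of the gadgetisation edges. -/
inductive gadE0 {V : Type} (E : V → V → Prop) : Gad V → Gad V → Prop
  | st {v u : V} : E v u → gadE0 E (gs v) (gt u)
  | si (v : V) : gadE0 E (gs v) (gi v)
  | it (v : V) : gadE0 E (gi v) (gt v)

/-- Edges of the gadgetisation (symmetric closure). -/
def gadE {V : Type} (E : V → V → Prop) (x y : Gad V) : Prop :=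
  gadE0 E x y ∨ gadE0 E y x

/-- Features of the gadgetisation: `(1,0)` on sources, `(0,1)` on sinks,
`(0,0)` on identifiers. -/
def gadf {V : Type} : Gad V → Fin 2 → Bool :=
  Sum.elim (fun _ => ![true, false])
    (Sum.elim (fun _ => ![false, true]) (fun _ => ![false, false]))

/-- The gadgetisation of a directed graph as a `2`-featured undirected graph. -/
def gadget (D : DGraph) : UFG where
  V := Gad D.V
  nonemptyV := ⟨gs (Classical.choice D.nonemptyV)⟩
  E := gadE D.E
  symm := fun _ _ h => h.symm
  f := gadf

/-- `≡^{L,c}` : the `L`-turn `2`-pebble `c`-counting back-and-forth equivalence on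
pointed `2`-featured undirected graphs. -/
def uequiv (c : ℕ) : (L : ℕ) → (G₁ G₂ : UFG) → G₁.V → G₂.V → Prop
  | 0, G₁, G₂, v₁, v₂ => G₁.f v₁ = G₂.f v₂
  | L + 1, G₁, G₂, v₁, v₂ =>
      G₁.f v₁ = G₂.f v₂ ∧
      (∀ k, k ≤ c → ∀ u₁ : Fin k → G₁.V, Function.Injective u₁ →
        ∃ u₂ : Fin k → G₂.V, Function.Injective u₂ ∧
          ∀ i, (G₁.E v₁ (u₁ i) ↔ G₂.E v₂ (u₂ i)) ∧ uequiv c L G₁ G₂ (u₁ i) (u₂ i)) ∧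
      (∀ k, k ≤ c → ∀ u₂ : Fin k → G₂.V, Function.Injective u₂ →
        ∃ u₁ : Fin k → G₁.V, Function.Injective u₁ ∧
          ∀ i, (G₁.E v₁ (u₁ i) ↔ G₂.E v₂ (u₂ i)) ∧ uequiv c L G₁ G₂ (u₁ i) (u₂ i))

/-!
The strict order is `<` on `Fin (2cL + 1)`; the second graph adds a loop at the middle vertex
`m = cL`. Coarsening a gadget vertex at radius `B` forgets its index when that index lies at
distance at least `B` from both ends, and vertices with equal coarsening at radius `c * d` are
`≡^{d,c}`-equivalent across the two gadgetisations. For compared vertices `x`, `y` with indices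
`a`, `b`, Duplicator answers a challenge `w` by `w` with `a` and `b` swapped: this keeps the
coarsening at radius `c * (d - 1)`, and keeps adjacency except for far vertices on the opposite
side of the gadget, which is also the only place where the loop at `m` becomes visible. Each such
class contains `c` vertices adjacent and `c` vertices non-adjacent to `y`, so there a fresh answer
is picked greedily.
-/

open Function

section Gadget

variable {V : Type}

lemma Gad.exists_eq_gs_or_gt_or_gi (x : Gad V) :
    (∃ v, x = gs v) ∨ (∃ v, x = gt v) ∨ (∃ v, x = gi v) := by
  rcases x with v | v | v
  exacts [Or.inl ⟨v, rfl⟩, Or.inr (Or.inl ⟨v, rfl⟩), Or.inr (Or.inr ⟨v, rfl⟩)]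

lemma gs_injective : Injective (gs : V → Gad V) := Sum.inl_injective
lemma gt_injective : Injective (gt : V → Gad V) := Sum.inr_injective.comp Sum.inl_injective

@[simp] lemma gs_inj {v u : V} : gs v = gs u ↔ v = u := gs_injective.eq_iff
@[simp] lemma gt_inj {v u : V} : gt v = gt u ↔ v = u := gt_injective.eq_iff
@[simp] lemma gi_inj {v u : V} : gi v = gi u ↔ v = u := by simp [gi]
@[simp] lemma gs_ne_gt {v u : V} : gs v ≠ gt u := by simp [gs, gt]
@[simp] lemma gs_ne_gi {v u : V} : gs v ≠ gi u := by simp [gs, gi]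
@[simp] lemma gt_ne_gs {v u : V} : gt v ≠ gs u := by simp [gs, gt]
@[simp] lemma gt_ne_gi {v u : V} : gt v ≠ gi u := by simp [gt, gi]
@[simp] lemma gi_ne_gs {v u : V} : gi v ≠ gs u := by simp [gs, gi]
@[simp] lemma gi_ne_gt {v u : V} : gi v ≠ gt u := by simp [gt, gi]

variable (E : V → V → Prop) (v u : V)

@[simp] lemma gadE_gs_gs : ¬ gadE E (gs v) (gs u) := by rintro (h | h) <;> cases h
@[simp] lemma gadE_gt_gt : ¬ gadE E (gt v) (gt u) := by rintro (h | h) <;> cases h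
@[simp] lemma gadE_gi_gi : ¬ gadE E (gi v) (gi u) := by rintro (h | h) <;> cases h

@[simp] lemma gadE_gs_gt : gadE E (gs v) (gt u) ↔ E v u :=
  ⟨by rintro (h | h) <;> cases h; assumption, fun h => .inl (.st h)⟩
@[simp] lemma gadE_gt_gs : gadE E (gt u) (gs v) ↔ E v u :=
  ⟨by rintro (h | h) <;> cases h; assumption, fun h => .inr (.st h)⟩
@[simp] lemma gadE_gs_gi : gadE E (gs v) (gi u) ↔ u = v :=
  ⟨by rintro (h | h) <;> cases h; rfl, by rintro rfl; exact .inl (.si u)⟩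
@[simp] lemma gadE_gi_gs : gadE E (gi v) (gs u) ↔ u = v :=
  ⟨by rintro (h | h) <;> cases h; rfl, by rintro rfl; exact .inr (.si u)⟩
@[simp] lemma gadE_gi_gt : gadE E (gi v) (gt u) ↔ u = v :=
  ⟨by rintro (h | h) <;> cases h; rfl, by rintro rfl; exact .inl (.it u)⟩
@[simp] lemma gadE_gt_gi : gadE E (gt v) (gi u) ↔ u = v :=
  ⟨by rintro (h | h) <;> cases h; rfl, by rintro rfl; exact .inr (.it u)⟩

end Gadget

namespace Gad

variable {V W X : Type}

def map (f : V → W) : Gad V → Gad W := Sum.map f (Sum.map f f)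

@[simp] lemma map_gs (f : V → W) (v : V) : map f (gs v) = gs (f v) := rfl
@[simp] lemma map_gt (f : V → W) (v : V) : map f (gt v) = gt (f v) := rfl
@[simp] lemma map_gi (f : V → W) (v : V) : map f (gi v) = gi (f v) := rfl

lemma map_map (f : V → W) (g : W → X) (x : Gad V) : map g (map f x) = map (g ∘ f) x := by
  obtain ⟨v, rfl⟩ | ⟨v, rfl⟩ | ⟨v, rfl⟩ := x.exists_eq_gs_or_gt_or_gi <;> rfl

lemma map_injective {f : V → W} (hf : Injective f) : Injective (map f) :=
  hf.sumMap (hf.sumMap hf)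

lemma gadf_map (f : V → W) (x : Gad V) : gadf (map f x) = gadf x := by
  obtain ⟨v, rfl⟩ | ⟨v, rfl⟩ | ⟨v, rfl⟩ := x.exists_eq_gs_or_gt_or_gi <;> rfl

lemma gadf_eq_of_map_eq {f : V → W} {x y : Gad V} (h : map f x = map f y) : gadf x = gadf y := by
  rw [← gadf_map f x, h, gadf_map]

end Gad

section CountingMatch

variable {V C : Type*}

lemma exists_apply_notMem_range {c k : ℕ} {g : Fin c → V} (hg : Injective g) (u : Fin k → V)
    (hk : k < c) : ∃ j, g j ∉ Set.range u := by
  by_contra! h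
  choose f hf using h
  have hf_inj : Injective f := fun i j hij => hg (by rw [← hf i, ← hf j, hij])
  have := Fintype.card_le_of_injective f hf_inj
  rw [Fintype.card_fin, Fintype.card_fin] at this
  omega

def CountingMatch (c : ℕ) (cl : V → C) (p q : V → Prop) : Prop :=
  ∀ k ≤ c, ∀ u₁ : Fin k → V, Injective u₁ → ∃ u₂ : Fin k → V, Injective u₂ ∧
    ∀ i, cl (u₂ i) = cl (u₁ i) ∧ (p (u₁ i) ↔ q (u₂ i))

theorem CountingMatch.of_injective {c : ℕ} {cl : V → C} {p q : V → Prop}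
    (big : C → Prop) (π : V → V) (hπ : Injective π)
    (hsmall : ∀ w, ¬ big (cl w) → cl (π w) = cl w ∧ (p w ↔ q (π w)))
    (hbig : ∀ w, big (cl w) →
      ∃ g : Fin c → V, Injective g ∧ ∀ j, cl (g j) = cl w ∧ (p w ↔ q (g j))) :
    CountingMatch c cl p q := by
  suffices h : ∀ k ≤ c, ∀ u₁ : Fin k → V, Injective u₁ → ∃ u₂ : Fin k → V, Injective u₂ ∧
      ∀ i, cl (u₂ i) = cl (u₁ i) ∧ (p (u₁ i) ↔ q (u₂ i)) ∧
        (¬ big (cl (u₁ i)) → u₂ i = π (u₁ i)) by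
    intro k hk u₁ hu₁
    obtain ⟨u₂, hu₂, h⟩ := h k hk u₁ hu₁
    exact ⟨u₂, hu₂, fun i => ⟨(h i).1, (h i).2.1⟩⟩
  intro k
  induction k with
  | zero => exact fun _ _ _ => ⟨Fin.elim0, fun i => i.elim0, fun i => i.elim0⟩
  | succ k ih =>
    intro hk u₁ hu₁
    obtain ⟨u₂, hu₂, h⟩ := ih (by omega) (Fin.init u₁) (hu₁.comp (Fin.castSucc_injective k))
    set w := u₁ (Fin.last k)
    obtain ⟨v, hv_fresh, hv⟩ : ∃ v, v ∉ Set.range u₂ ∧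
        cl v = cl w ∧ (p w ↔ q v) ∧ (¬ big (cl w) → v = π w) := by
      by_cases hw : big (cl w)
      · obtain ⟨g, hg_inj, hg⟩ := hbig w hw
        obtain ⟨j, hj⟩ := exists_apply_notMem_range hg_inj u₂ (by omega)
        exact ⟨g j, hj, (hg j).1, (hg j).2, absurd hw⟩
      · refine ⟨π w, ?_, (hsmall w hw).1, (hsmall w hw).2, fun _ => rfl⟩
        rintro ⟨i, hi⟩
        -- an earlier vertex answered by `π w` lies in the class of `w`, so it was answered by `π`
        have hi_small : ¬ big (cl (Fin.init u₁ i)) := by rwa [← (h i).1, hi, (hsmall w hw).1]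
        have := hu₁ (hπ (hi.symm.trans ((h i).2.2 hi_small)))
        exact (Fin.castSucc_lt_last i).ne' this
    refine ⟨Fin.snoc u₂ v, Fin.snoc_injective_of_injective hu₂ hv_fresh, Fin.lastCases ?_ ?_⟩
    · simpa only [Fin.snoc_last] using hv
    · intro i
      simp only [Fin.snoc_castSucc]
      exact h i

end CountingMatch

lemma Equiv.swap_apply_eq_right_iff {α : Type*} [DecidableEq α] {a b z : α} :
    Equiv.swap a b z = b ↔ z = a := by
  rw [Equiv.swap_apply_eq_iff, Equiv.swap_apply_right]

section Coarsening

variable {n : ℕ} {B : ℕ} {a b z : Fin n}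

def FarFromEnds (B : ℕ) (z : Fin n) : Prop := B ≤ z ∧ z + B < n

instance (B : ℕ) (z : Fin n) : Decidable (FarFromEnds B z) :=
  inferInstanceAs (Decidable (_ ∧ _))

lemma FarFromEnds.mono {B' : ℕ} (h : B ≤ B') (hz : FarFromEnds B' z) : FarFromEnds B z := by
  unfold FarFromEnds at *
  omega

lemma exists_injective_far_above {c : ℕ} (h : FarFromEnds (B + c) b) :
    ∃ g : Fin c → Fin n, Injective g ∧ ∀ j, FarFromEnds B (g j) ∧ b < g j := by
  unfold FarFromEnds at h
  refine ⟨fun j => ⟨b + 1 + j, by omega⟩, ?_, fun j => ?_⟩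
  · intro i j hij
    simp only [Fin.mk.injEq] at hij
    omega
  · have := j.isLt
    simp only [FarFromEnds, Fin.lt_def]
    omega

lemma exists_injective_far_below {c : ℕ} (h : FarFromEnds (B + c) b) :
    ∃ g : Fin c → Fin n, Injective g ∧ ∀ j, FarFromEnds B (g j) ∧ g j < b := by
  unfold FarFromEnds at h
  refine ⟨fun j => ⟨b - 1 - j, by omega⟩, ?_, fun j => ?_⟩
  · intro i j hij
    simp only [Fin.mk.injEq] at hij
    omega
  · have := j.isLt
    simp only [FarFromEnds, Fin.lt_def]
    omega

def coarsen (B : ℕ) (z : Fin n) : Option (Fin n) := if FarFromEnds B z then none else some z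

lemma coarsen_eq_none_iff : coarsen B z = none ↔ FarFromEnds B z := by
  unfold coarsen
  split_ifs <;> simpa

lemma coarsen_eq_coarsen_iff :
    coarsen B a = coarsen B b ↔ a = b ∨ FarFromEnds B a ∧ FarFromEnds B b := by
  unfold coarsen
  split_ifs with ha hb hb <;> simp [*] <;> rintro rfl <;> contradiction

lemma coarsen_eq_coarsen_of_le {B' : ℕ} (h : B ≤ B') (hab : coarsen B' a = coarsen B' b) :
    coarsen B a = coarsen B b := by
  rw [coarsen_eq_coarsen_iff] at hab ⊢
  exact hab.imp_right fun hab => ⟨hab.1.mono h, hab.2.mono h⟩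

lemma coarsen_swap (h : coarsen B a = coarsen B b) (z : Fin n) :
    coarsen B (Equiv.swap a b z) = coarsen B z := by
  rw [Equiv.swap_apply_def]
  split_ifs with ha hb
  · rw [ha, h]
  · rw [hb, h]
  · rfl

def gadClass (B : ℕ) : Gad (Fin n) → Gad (Option (Fin n)) := Gad.map (coarsen B)

lemma gadClass_map_swap (h : coarsen B a = coarsen B b) (w : Gad (Fin n)) :
    gadClass B (Gad.map (Equiv.swap a b) w) = gadClass B w := by
  simp only [gadClass, Gad.map_map]
  congr 1
  exact funext (coarsen_swap h)

end Coarsening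

section LtExceptAt

variable {n : ℕ}

def LtExceptAt (m : Fin n) (R : Fin n → Fin n → Prop) : Prop :=
  ∀ u v, u ≠ m ∨ v ≠ m → (R u v ↔ u < v)

lemma ltExceptAt_lt (m : Fin n) : LtExceptAt m (· < ·) := fun _ _ _ => Iff.rfl

lemma ltExceptAt_lt_or_loop (m : Fin n) : LtExceptAt m (fun u v => u < v ∨ u = m ∧ v = m) :=
  fun _ _ _ => by tauto

variable {m a b z : Fin n} {R R₁ R₂ : Fin n → Fin n → Prop} {B c : ℕ}

lemma LtExceptAt.rel_iff_of_ne (hR : LtExceptAt m R) (h : a ≠ b) : R a b ↔ a < b :=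
  hR a b (by by_contra! h'; exact h (h'.1.trans h'.2.symm))

lemma rel_iff_rel_swap_right (hR₁ : LtExceptAt m R₁) (hR₂ : LtExceptAt m R₂)
    (hm : FarFromEnds (B + c) m) (hab : coarsen (B + c) a = coarsen (B + c) b)
    (hz : FarFromEnds (B + c) b → ¬ FarFromEnds B z) :
    R₁ a z ↔ R₂ b (Equiv.swap a b z) := by
  rcases coarsen_eq_coarsen_iff.mp hab with rfl | ⟨ha, hb⟩
  · have : a ≠ m ∨ z ≠ m := by
      by_contra! h
      obtain ⟨rfl, rfl⟩ := h
      exact hz hm (hm.mono (Nat.le_add_right B c))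
    rw [Equiv.swap_self, Equiv.refl_apply, hR₁ _ _ this, hR₂ _ _ this]
  · have hz := hz hb
    unfold FarFromEnds at hm ha hb hz
    have hzm : z ≠ m := by rintro rfl; omega
    have hza : z ≠ a := by rintro rfl; omega
    have hzb : z ≠ b := by rintro rfl; omega
    rw [Equiv.swap_apply_of_ne_of_ne hza hzb, hR₁ _ _ (.inr hzm), hR₂ _ _ (.inr hzm), Fin.lt_def,
      Fin.lt_def]
    omega

lemma rel_iff_rel_swap_left (hR₁ : LtExceptAt m R₁) (hR₂ : LtExceptAt m R₂)
    (hm : FarFromEnds (B + c) m) (hab : coarsen (B + c) a = coarsen (B + c) b)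
    (hz : FarFromEnds (B + c) b → ¬ FarFromEnds B z) :
    R₁ z a ↔ R₂ (Equiv.swap a b z) b := by
  rcases coarsen_eq_coarsen_iff.mp hab with rfl | ⟨ha, hb⟩
  · have : z ≠ m ∨ a ≠ m := by
      by_contra! h
      obtain ⟨rfl, rfl⟩ := h
      exact hz hm (hm.mono (Nat.le_add_right B c))
    rw [Equiv.swap_self, Equiv.refl_apply, hR₁ _ _ this, hR₂ _ _ this]
  · have hz := hz hb
    unfold FarFromEnds at hm ha hb hz
    have hzm : z ≠ m := by rintro rfl; omega
    have hza : z ≠ a := by rintro rfl; omega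
    have hzb : z ≠ b := by rintro rfl; omega
    rw [Equiv.swap_apply_of_ne_of_ne hza hzb, hR₁ _ _ (.inl hzm), hR₂ _ _ (.inl hzm), Fin.lt_def,
      Fin.lt_def]
    omega

end LtExceptAt

section GadgetMatching

variable {n B c : ℕ} {m a b : Fin n} {R₁ R₂ : Fin n → Fin n → Prop}

lemma countingMatch_gs (hR₁ : LtExceptAt m R₁) (hR₂ : LtExceptAt m R₂)
    (hm : FarFromEnds (B + c) m) (hab : coarsen (B + c) a = coarsen (B + c) b) :
    CountingMatch c (gadClass B) (gadE R₁ (gs a)) (gadE R₂ (gs b)) := by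
  refine .of_injective (fun C => FarFromEnds (B + c) b ∧ C = gt none)
    (Gad.map (Equiv.swap a b)) (Gad.map_injective (Equiv.injective _)) (fun w hw => ?_) ?_
  · refine ⟨gadClass_map_swap (coarsen_eq_coarsen_of_le (Nat.le_add_right B c) hab) w, ?_⟩
    obtain ⟨z, rfl⟩ | ⟨z, rfl⟩ | ⟨z, rfl⟩ := w.exists_eq_gs_or_gt_or_gi
    · simp
    · simp only [Gad.map_gt, gadE_gs_gt]
      refine rel_iff_rel_swap_right hR₁ hR₂ hm hab fun hb hz => hw ⟨hb, ?_⟩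
      simp [gadClass, coarsen_eq_none_iff.mpr hz]
    · simp [Equiv.swap_apply_eq_right_iff]
  · rintro w ⟨hb, hw⟩
    obtain ⟨z, rfl⟩ : ∃ z, w = gt z := by
      obtain ⟨z, rfl⟩ | ⟨z, rfl⟩ | ⟨z, rfl⟩ := w.exists_eq_gs_or_gt_or_gi <;> simp_all [gadClass]
    rw [hw, gadE_gs_gt]
    by_cases hz : R₁ a z
    · obtain ⟨g, hg_inj, hg⟩ := exists_injective_far_above hb
      refine ⟨gt ∘ g, gt_injective.comp hg_inj, fun j => ⟨?_, ?_⟩⟩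
      · simp [gadClass, coarsen_eq_none_iff.mpr (hg j).1]
      · simp [hz, hR₂.rel_iff_of_ne (hg j).2.ne, (hg j).2]
    · obtain ⟨g, hg_inj, hg⟩ := exists_injective_far_below hb
      refine ⟨gt ∘ g, gt_injective.comp hg_inj, fun j => ⟨?_, ?_⟩⟩
      · simp [gadClass, coarsen_eq_none_iff.mpr (hg j).1]
      · simp [hz, hR₂.rel_iff_of_ne (hg j).2.ne', (hg j).2.not_gt]

lemma countingMatch_gt (hR₁ : LtExceptAt m R₁) (hR₂ : LtExceptAt m R₂)
    (hm : FarFromEnds (B + c) m) (hab : coarsen (B + c) a = coarsen (B + c) b) :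
    CountingMatch c (gadClass B) (gadE R₁ (gt a)) (gadE R₂ (gt b)) := by
  refine .of_injective (fun C => FarFromEnds (B + c) b ∧ C = gs none)
    (Gad.map (Equiv.swap a b)) (Gad.map_injective (Equiv.injective _)) (fun w hw => ?_) ?_
  · refine ⟨gadClass_map_swap (coarsen_eq_coarsen_of_le (Nat.le_add_right B c) hab) w, ?_⟩
    obtain ⟨z, rfl⟩ | ⟨z, rfl⟩ | ⟨z, rfl⟩ := w.exists_eq_gs_or_gt_or_gi
    · simp only [Gad.map_gs, gadE_gt_gs]
      refine rel_iff_rel_swap_left hR₁ hR₂ hm hab fun hb hz => hw ⟨hb, ?_⟩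
      simp [gadClass, coarsen_eq_none_iff.mpr hz]
    · simp
    · simp [Equiv.swap_apply_eq_right_iff]
  · rintro w ⟨hb, hw⟩
    obtain ⟨z, rfl⟩ : ∃ z, w = gs z := by
      obtain ⟨z, rfl⟩ | ⟨z, rfl⟩ | ⟨z, rfl⟩ := w.exists_eq_gs_or_gt_or_gi <;> simp_all [gadClass]
    rw [hw, gadE_gt_gs]
    by_cases hz : R₁ z a
    · obtain ⟨g, hg_inj, hg⟩ := exists_injective_far_below hb
      refine ⟨gs ∘ g, gs_injective.comp hg_inj, fun j => ⟨?_, ?_⟩⟩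
      · simp [gadClass, coarsen_eq_none_iff.mpr (hg j).1]
      · simp [hz, hR₂.rel_iff_of_ne (hg j).2.ne, (hg j).2]
    · obtain ⟨g, hg_inj, hg⟩ := exists_injective_far_above hb
      refine ⟨gs ∘ g, gs_injective.comp hg_inj, fun j => ⟨?_, ?_⟩⟩
      · simp [gadClass, coarsen_eq_none_iff.mpr (hg j).1]
      · simp [hz, hR₂.rel_iff_of_ne (hg j).2.ne', (hg j).2.not_gt]

lemma countingMatch_gi (hab : coarsen B a = coarsen B b) :
    CountingMatch c (gadClass B) (gadE R₁ (gi a)) (gadE R₂ (gi b)) := by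
  refine .of_injective (fun _ => False) (Gad.map (Equiv.swap a b))
    (Gad.map_injective (Equiv.injective _)) (fun w _ => ⟨gadClass_map_swap hab w, ?_⟩) (by simp)
  obtain ⟨z, rfl⟩ | ⟨z, rfl⟩ | ⟨z, rfl⟩ := w.exists_eq_gs_or_gt_or_gi <;>
    simp [Equiv.swap_apply_eq_right_iff]

theorem countingMatch_of_gadClass_eq (hR₁ : LtExceptAt m R₁) (hR₂ : LtExceptAt m R₂)
    (hm : FarFromEnds (B + c) m) {x y : Gad (Fin n)}
    (hxy : gadClass (B + c) x = gadClass (B + c) y) :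
    CountingMatch c (gadClass B) (gadE R₁ x) (gadE R₂ y) := by
  obtain ⟨a, rfl⟩ | ⟨a, rfl⟩ | ⟨a, rfl⟩ := x.exists_eq_gs_or_gt_or_gi <;>
    obtain ⟨b, rfl⟩ | ⟨b, rfl⟩ | ⟨b, rfl⟩ := y.exists_eq_gs_or_gt_or_gi <;>
    simp only [gadClass, Gad.map_gs, Gad.map_gt, Gad.map_gi, gs_inj, gt_inj, gi_inj, gs_ne_gt,
      gs_ne_gi, gt_ne_gs, gt_ne_gi, gi_ne_gs, gi_ne_gt] at hxy
  exacts [countingMatch_gs hR₁ hR₂ hm hxy, countingMatch_gt hR₁ hR₂ hm hxy,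
    countingMatch_gi (coarsen_eq_coarsen_of_le (Nat.le_add_right B c) hxy)]

end GadgetMatching

def DGraph.ofRel {V : Type} [Fintype V] [Nonempty V] (E : V → V → Prop) : DGraph where
  V := V
  nonemptyV := inferInstance
  E := E

theorem uequiv_gadget_of_gadClass_eq {n c d : ℕ} [NeZero n] {m : Fin n}
    {R₁ R₂ : Fin n → Fin n → Prop} (hR₁ : LtExceptAt m R₁) (hR₂ : LtExceptAt m R₂)
    (hm : FarFromEnds (c * d) m) {x y : Gad (Fin n)}
    (hxy : gadClass (c * d) x = gadClass (c * d) y) :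
    uequiv c d (gadget (.ofRel R₁)) (gadget (.ofRel R₂)) x y := by
  induction d generalizing x y with
  | zero => exact Gad.gadf_eq_of_map_eq hxy
  | succ d ih =>
    rw [Nat.mul_succ] at hm hxy
    replace ih := @ih (hm.mono (Nat.le_add_right _ _))
    refine ⟨Gad.gadf_eq_of_map_eq hxy, fun k hk u₁ hu₁ => ?_, fun k hk u₂ hu₂ => ?_⟩
    · obtain ⟨u₂, hu₂, h⟩ := countingMatch_of_gadClass_eq hR₁ hR₂ hm hxy k hk u₁ hu₁
      exact ⟨u₂, hu₂, fun i => ⟨(h i).2, ih (h i).1.symm⟩⟩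
    · obtain ⟨u₁, hu₁, h⟩ := countingMatch_of_gadClass_eq hR₂ hR₁ hm hxy.symm k hk u₂ hu₂
      exact ⟨u₁, hu₁, fun i => ⟨(h i).2.symm, ih (h i).1⟩⟩

lemma isSLO_lt {V : Type} [LinearOrder V] : IsSLO (fun u v : V => u < v) :=
  ⟨lt_irrefl, fun _ _ _ => lt_trans, fun _ _ => lt_or_gt_of_ne⟩

/-- For all `L ≥ 0` and `c ≥ 0` there are a gadgetisation of a
strict linear order and a gadgetisation (over the same vertices and features) of
a directed graph that is not a strict linear order which are `≡^{L,c}`-equivalent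
at every vertex. -/
theorem stmt19 (L c : ℕ) :
    ∃ (D : DGraph) (R' : D.V → D.V → Prop),
      IsSLO D.E ∧ ¬ IsSLO R' ∧
      ∀ x : Gad D.V, uequiv c L (gadget D) (gadget { D with E := R' }) x x := by
  let m : Fin (2 * (c * L) + 1) := ⟨c * L, by omega⟩
  have hm : FarFromEnds (c * L) m := ⟨le_rfl, by change c * L + c * L < _; omega⟩
  refine ⟨.ofRel (· < ·), fun u v : Fin _ => u < v ∨ u = m ∧ v = m, isSLO_lt (V := Fin _), ?_,
    fun x => ?_⟩
  · rintro ⟨hirr, -, -⟩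
    exact hirr m (.inr ⟨rfl, rfl⟩)
  · exact uequiv_gadget_of_gadClass_eq (ltExceptAt_lt m) (ltExceptAt_lt_or_loop m) hm rfl
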